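/- Let Φ be an m×N complex matrix satisfying the (k,δ)-restricted isometry property for some δ < 1/3. Then Φ satisfies the (k,3)-width property, i.e., ‖x‖₂ ≤ (3/√k)·‖x‖₁ for every x in the nullspace of Φ. -/

import Mathlib

open scoped BigOperators

/-- Number of nonzero entries ("0-norm"). -/
noncomputable def norm0 {N : Type*} (x : N → ℂ) : ℕ := Nat.card {i // x i ≠ 0}

/-- The 1-norm. -/
noncomputable def norm1 {N : Type*} [Fintype N] (x : N → ℂ) : ℝ := ∑ i, ‖x i‖

/-- The squared 2-norm. -/
noncomputable def norm2sq {N : Type*} [Fintype N] (x : N → ℂ) : ℝ := ∑ i, ‖x i‖ ^ 2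

/-- Numerical sparsity: `ns x = ‖x‖₁² / ‖x‖₂²`. -/
noncomputable def ns {N : Type*} [Fintype N] (x : N → ℂ) : ℝ := norm1 x ^ 2 / norm2sq x

/-- The unitary discrete Fourier transform on `ℂ^(ZMod n)`. -/
noncomputable def dft (n : ℕ) [NeZero n] (x : ZMod n → ℂ) : ZMod n → ℂ := fun k =>
  (1 / Real.sqrt n : ℝ) *
    ∑ j : ZMod n, x j *
      Complex.exp (-(2 * (Real.pi : ℂ) * Complex.I * (j.val : ℂ) * (k.val : ℂ)) / (n : ℂ))
/-- `Φ` satisfies the `(k,δ)`-restricted isometry property: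
`(1−δ)‖x‖₂² ≤ ‖Φx‖₂² ≤ (1+δ)‖x‖₂²` for all `k`-sparse `x`. -/
def RIP {M N : Type*} [Fintype M] [Fintype N] (Φ : Matrix M N ℂ) (k : ℕ) (δ : ℝ) : Prop :=
  ∀ x : N → ℂ, norm0 x ≤ k →
    (1 - δ) * norm2sq x ≤ norm2sq (Φ.mulVec x) ∧ norm2sq (Φ.mulVec x) ≤ (1 + δ) * norm2sq x

/-! Split a null vector `x` as `h + t`, where `h` keeps the (at most `k`) entries exceeding
`‖x‖₁ / k`. Peeling off the `k` largest entries of `t` again and again, each block is `k`-sparse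
with entries bounded by the average of the previous block, so the upper RIP bound summed over the
blocks gives `‖Φt‖₂ ≤ 2 √(1+δ) ‖x‖₁ / √k`. Since `Φh = -Φt`, the lower RIP bound yields
`‖h‖₂² ≤ 4 (1+δ)/(1-δ) ‖x‖₁² / k ≤ 8 ‖x‖₁² / k`, while `‖t‖₂² ≤ ‖t‖_∞ ‖t‖₁ ≤ ‖x‖₁² / k`. -/

open Finset Matrix

theorem exists_finset_card_eq_forall_le {α β : Type*} [Fintype α] [LinearOrder β] (f : α → β)
    {k : ℕ} (hk : k ≤ Fintype.card α) :
    ∃ S : Finset α, #S = k ∧ ∀ i ∈ S, ∀ j ∉ S, f j ≤ f i := by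
  classical
  induction k with
  | zero => exact ⟨∅, rfl, by simp⟩
  | succ k ih =>
    obtain ⟨S, hS, hSf⟩ := ih (Nat.le_of_succ_le hk)
    have hne : Sᶜ.Nonempty := by
      rw [← card_pos, card_compl, hS]
      omega
    obtain ⟨i₀, hi₀, hmax⟩ := exists_max_image Sᶜ f hne
    rw [mem_compl] at hi₀
    refine ⟨insert i₀ S, by rw [card_insert_of_notMem hi₀, hS], ?_⟩
    intro i hi j hj
    rw [mem_insert, not_or] at hj
    rcases mem_insert.mp hi with rfl | hi
    · exact hmax j (mem_compl.mpr hj.2)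
    · exact hSf i hi j hj.2

lemma norm0_eq_ncard_support {N : Type*} (x : N → ℂ) : norm0 x = (Function.support x).ncard :=
  rfl

lemma norm_indicator_le {N : Type*} {s : Set N} {x : N → ℂ} {β : ℝ} (hβ0 : 0 ≤ β)
    (hβ : ∀ i ∈ s, ‖x i‖ ≤ β) (i : N) : ‖s.indicator x i‖ ≤ β := by
  rw [norm_indicator_eq_indicator_norm]
  exact Set.indicator_le' hβ (fun _ _ => hβ0) i

section Norms

variable {N : Type*} [Fintype N]

lemma norm1_nonneg (x : N → ℂ) : 0 ≤ norm1 x :=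
  sum_nonneg fun _ _ => norm_nonneg _

lemma norm2sq_nonneg (x : N → ℂ) : 0 ≤ norm2sq x :=
  sum_nonneg fun _ _ => sq_nonneg _

lemma norm2sq_neg (x : N → ℂ) : norm2sq (-x) = norm2sq x := by
  simp [norm2sq]

lemma sqrt_norm2sq_add_le (x y : N → ℂ) :
    √(norm2sq (x + y)) ≤ √(norm2sq x) + √(norm2sq y) := by
  have h := norm_add_le (WithLp.toLp 2 x : EuclideanSpace ℂ N) (WithLp.toLp 2 y)
  simpa only [EuclideanSpace.norm_eq, ← WithLp.toLp_add, norm2sq] using h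

lemma norm0_indicator_le (s : Set N) (x : N → ℂ) : norm0 (s.indicator x) ≤ s.ncard := by
  rw [norm0_eq_ncard_support, Set.support_indicator]
  exact Set.ncard_inter_le_ncard_left _ _

lemma sum_comp_indicator_add_compl {g : ℂ → ℝ} (hg : g 0 = 0) (s : Set N) (x : N → ℂ) :
    ∑ i, g (s.indicator x i) + ∑ i, g (sᶜ.indicator x i) = ∑ i, g (x i) := by
  rw [← sum_add_distrib]
  refine sum_congr rfl fun i _ => ?_
  by_cases hi : i ∈ s <;> simp [hi, hg]

lemma norm1_indicator_add_compl (s : Set N) (x : N → ℂ) :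
    norm1 (s.indicator x) + norm1 (sᶜ.indicator x) = norm1 x :=
  sum_comp_indicator_add_compl norm_zero s x

lemma norm2sq_indicator_add_compl (s : Set N) (x : N → ℂ) :
    norm2sq (s.indicator x) + norm2sq (sᶜ.indicator x) = norm2sq x :=
  sum_comp_indicator_add_compl (g := fun z => ‖z‖ ^ 2) (by simp) s x

lemma norm1_indicator_le (s : Set N) (x : N → ℂ) : norm1 (s.indicator x) ≤ norm1 x := by
  linarith [norm1_indicator_add_compl s x, norm1_nonneg (sᶜ.indicator x)]

lemma norm1_indicator_finset (S : Finset N) (x : N → ℂ) :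
    norm1 ((S : Set N).indicator x) = ∑ i ∈ S, ‖x i‖ := by
  simp [norm1, norm_indicator_eq_indicator_norm, sum_indicator_subset]

lemma norm2sq_le_norm0_mul_sq (x : N → ℂ) {β : ℝ} (hβ : ∀ i, ‖x i‖ ≤ β) :
    norm2sq x ≤ norm0 x * β ^ 2 := by
  have hsupp : norm0 x = #{i | x i ≠ 0} := by
    simp [norm0, Nat.card_eq_fintype_card, Fintype.card_subtype]
  rw [norm2sq, ← sum_filter_of_ne fun i _ hi => by simpa using hi, hsupp, ← nsmul_eq_mul]
  exact sum_le_card_nsmul _ _ _ fun i _ => pow_le_pow_left₀ (norm_nonneg _) (hβ i) 2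

lemma norm2sq_le_mul_norm1 (x : N → ℂ) {β : ℝ} (hβ : ∀ i, ‖x i‖ ≤ β) :
    norm2sq x ≤ β * norm1 x := by
  rw [norm2sq, norm1, mul_sum]
  refine sum_le_sum fun i _ => ?_
  rw [sq]
  exact mul_le_mul_of_nonneg_right (hβ i) (norm_nonneg _)

lemma ncard_setOf_norm1_div_lt_le (x : N → ℂ) {k : ℕ} (hk : 0 < k) :
    {i | norm1 x / k < ‖x i‖}.ncard ≤ k := by
  classical
  set A := norm1 x
  set T : Finset N := {i | A / k < ‖x i‖}
  rw [show {i | A / k < ‖x i‖} = (T : Set N) by simp [T], Set.ncard_coe_finset]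
  by_contra! hkT
  have hT : T.Nonempty := card_pos.mp (hk.trans hkT)
  have hk' : (0 : ℝ) < k := by exact_mod_cast hk
  have hTA : #T * (A / k) < A := calc
    _ = ∑ _i ∈ T, A / k := by simp
    _ < ∑ i ∈ T, ‖x i‖ := sum_lt_sum_of_nonempty hT fun i hi => (mem_filter.mp hi).2
    _ ≤ A := sum_le_sum_of_subset_of_nonneg (subset_univ T) fun _ _ _ => norm_nonneg _
  have hkA : k * (A / k) ≤ #T * (A / k) :=
    mul_le_mul_of_nonneg_right (by exact_mod_cast hkT.le) (div_nonneg (norm1_nonneg x) hk'.le)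
  rw [mul_div_cancel₀ _ hk'.ne'] at hkA
  linarith

end Norms

def UpperRIP {M N : Type*} [Fintype M] [Fintype N] (Φ : Matrix M N ℂ) (k : ℕ) (C : ℝ) : Prop :=
  ∀ y : N → ℂ, norm0 y ≤ k → norm2sq (Φ *ᵥ y) ≤ C * norm2sq y

section Shelling

variable {M N : Type*} [Fintype M] [Fintype N] {Φ : Matrix M N ℂ} {k : ℕ} {C : ℝ}

lemma RIP.upperRIP {δ : ℝ} (h : RIP Φ k δ) : UpperRIP Φ k (1 + δ) :=
  fun y hy => (h y hy).2

lemma UpperRIP.mono {C' : ℝ} (h : UpperRIP Φ k C) (hC : C ≤ C') : UpperRIP Φ k C' :=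
  fun y hy => (h y hy).trans (mul_le_mul_of_nonneg_right hC (norm2sq_nonneg y))

lemma sqrt_norm2sq_le_of_norm0_le {y : N → ℂ} (hy : norm0 y ≤ k) {β : ℝ} (hβ0 : 0 ≤ β)
    (hβ : ∀ i, ‖y i‖ ≤ β) : √(norm2sq y) ≤ √k * β := by
  rw [Real.sqrt_le_left (by positivity), mul_pow, Real.sq_sqrt (Nat.cast_nonneg k)]
  calc norm2sq y ≤ norm0 y * β ^ 2 := norm2sq_le_norm0_mul_sq y hβ
    _ ≤ k * β ^ 2 := by gcongr

lemma UpperRIP.sqrt_norm2sq_mulVec_le_of_norm0_le (hΦ : UpperRIP Φ k C) {y : N → ℂ}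
    (hy : norm0 y ≤ k) : √(norm2sq (Φ *ᵥ y)) ≤ √C * √(norm2sq y) := by
  rw [← Real.sqrt_mul' C (norm2sq_nonneg y)]
  exact Real.sqrt_le_sqrt (hΦ y hy)

lemma UpperRIP.sqrt_norm2sq_mulVec_le (hΦ : UpperRIP Φ k C) (hk : 1 ≤ k) (y : N → ℂ) {β : ℝ}
    (hβ0 : 0 ≤ β) (hβ : ∀ i, ‖y i‖ ≤ β) :
    √(norm2sq (Φ *ᵥ y)) ≤ √C * (√k * β + norm1 y / √k) := by
  induction hn : norm0 y using Nat.strong_induction_on generalizing y β with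
  | _ n ih =>
  have hk' : (0 : ℝ) < k := by exact_mod_cast hk
  have hsparse : ∀ z : N → ℂ, norm0 z ≤ k → (∀ i, ‖z i‖ ≤ β) →
      √(norm2sq (Φ *ᵥ z)) ≤ √C * (√k * β) := fun z hz hzβ =>
    (hΦ.sqrt_norm2sq_mulVec_le_of_norm0_le hz).trans
      (mul_le_mul_of_nonneg_left (sqrt_norm2sq_le_of_norm0_le hz hβ0 hzβ) (Real.sqrt_nonneg C))
  rcases le_or_gt n k with hnk | hkn
  · refine (hsparse y (hn ▸ hnk) hβ).trans ?_
    gcongr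
    exact le_add_of_nonneg_right (div_nonneg (norm1_nonneg y) (Real.sqrt_nonneg k))
  have hkN : k ≤ Fintype.card N := by
    rw [← Nat.card_eq_fintype_card]
    exact hkn.le.trans (hn ▸ Set.ncard_le_card _)
  obtain ⟨S, hS, hStop⟩ := exists_finset_card_eq_forall_le (fun i => ‖y i‖) hkN
  set y₁ := (S : Set N).indicator y
  set y₂ := (S : Set N)ᶜ.indicator y
  have hy₁ : norm0 y₁ ≤ k := by
    simpa [hS] using norm0_indicator_le (S : Set N) y
  -- `S` dominates some nonzero entry outside it, so `S` lies in the support of `y`.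
  have hy₂ : norm0 y₂ < n := by
    obtain ⟨j, hjy, hjS⟩ : ∃ j ∈ Function.support y, j ∉ S := by
      by_contra! h
      have := Set.ncard_le_ncard (show Function.support y ⊆ S from h)
      rw [Set.ncard_coe_finset, hS, ← norm0_eq_ncard_support, hn] at this
      omega
    obtain ⟨i, hiS⟩ : S.Nonempty := card_pos.mp (hS ▸ hk)
    have hiy : i ∈ Function.support y :=
      norm_pos_iff.mp ((norm_pos_iff.mpr hjy).trans_le (hStop i hiS j hjS))
    rw [← hn, norm0_eq_ncard_support, norm0_eq_ncard_support, Set.support_indicator]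
    exact Set.ncard_lt_ncard ⟨Set.inter_subset_right, fun h => (h hiy).1 hiS⟩
  have hβ₂ : ∀ i, ‖y₂ i‖ ≤ norm1 y₁ / k := by
    refine norm_indicator_le (div_nonneg (norm1_nonneg _) hk'.le) fun j hj => ?_
    rw [le_div_iff₀ hk', norm1_indicator_finset, ← hS]
    calc ‖y j‖ * #S = ∑ _i ∈ S, ‖y j‖ := by simp [mul_comm]
      _ ≤ ∑ i ∈ S, ‖y i‖ := sum_le_sum fun i hi => hStop i hi j hj
  calc √(norm2sq (Φ *ᵥ y)) ≤ √(norm2sq (Φ *ᵥ y₁)) + √(norm2sq (Φ *ᵥ y₂)) := by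
        have h := sqrt_norm2sq_add_le (Φ *ᵥ y₁) (Φ *ᵥ y₂)
        rwa [← mulVec_add, Set.indicator_self_add_compl] at h
    _ ≤ √C * (√k * β) + √C * (√k * (norm1 y₁ / k) + norm1 y₂ / √k) :=
        add_le_add (hsparse y₁ hy₁ (norm_indicator_le hβ0 fun i _ => hβ i))
          (ih _ hy₂ y₂ (div_nonneg (norm1_nonneg _) hk'.le) hβ₂ rfl)
    _ = √C * (√k * β + norm1 y / √k) := by
        rw [← norm1_indicator_add_compl (S : Set N) y]
        field_simp
        rw [Real.sq_sqrt hk'.le]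
        ring

lemma UpperRIP.norm2sq_mulVec_le_of_norm_le_div (hΦ : UpperRIP Φ k C) (hk : 1 ≤ k) (hC : 0 ≤ C)
    {y : N → ℂ} {A : ℝ} (hy : ∀ i, ‖y i‖ ≤ A / k) (hy1 : norm1 y ≤ A) :
    norm2sq (Φ *ᵥ y) ≤ C * (4 * (A ^ 2 / k)) := by
  have hk' : (0 : ℝ) < k := by exact_mod_cast hk
  have hA : 0 ≤ A := (norm1_nonneg y).trans hy1
  have h := (hΦ.sqrt_norm2sq_mulVec_le hk y (by positivity) hy).trans
    (by gcongr : _ ≤ √C * (√k * (A / k) + A / √k))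
  rw [Real.sqrt_le_left (by positivity)] at h
  refine h.trans_eq ?_
  field_simp
  rw [Real.sq_sqrt hC, Real.sq_sqrt hk'.le]
  ring

lemma norm2sq_mulVec_indicator_eq_compl {x : N → ℂ} (hx : Φ *ᵥ x = 0) (s : Set N) :
    norm2sq (Φ *ᵥ s.indicator x) = norm2sq (Φ *ᵥ sᶜ.indicator x) := by
  rw [← norm2sq_neg (Φ *ᵥ sᶜ.indicator x), neg_eq_of_add_eq_zero_left]
  rw [← mulVec_add, Set.indicator_self_add_compl, hx]

end Shelling

/-- The `(k,δ)`-restricted isometry property with `δ < 1/3` implies the `(k,3)`-width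
property: `‖x‖₂ ≤ (3/√k)‖x‖₁` for every `x` in the nullspace of `Φ`. -/
theorem RIP_implies_width {M N : Type*} [Fintype M] [Fintype N]
    (Φ : Matrix M N ℂ) (k : ℕ) (δ : ℝ) (hk : 1 ≤ k) (hδ : δ < 1 / 3)
    (hrip : RIP Φ k δ) :
    ∀ x : N → ℂ, Φ.mulVec x = 0 → Real.sqrt (norm2sq x) ≤ 3 / Real.sqrt k * norm1 x := by
  intro x hx
  have hk' : (0 : ℝ) < k := by exact_mod_cast hk
  set A := norm1 x
  set T : Set N := {i | A / k < ‖x i‖}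
  have hAk : 0 ≤ A / k := div_nonneg (norm1_nonneg x) hk'.le
  have ht_le : ∀ i, ‖Tᶜ.indicator x i‖ ≤ A / k :=
    norm_indicator_le hAk fun _ hi => not_lt.mp hi
  have hΦt : norm2sq (Φ *ᵥ Tᶜ.indicator x) ≤ 4 / 3 * (4 * (A ^ 2 / k)) :=
    (hrip.upperRIP.mono (by linarith)).norm2sq_mulVec_le_of_norm_le_div hk (by norm_num) ht_le
      (norm1_indicator_le _ _)
  have hh : (1 - δ) * norm2sq (T.indicator x) ≤ 4 / 3 * (4 * (A ^ 2 / k)) :=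
    (hrip _ ((norm0_indicator_le T x).trans (ncard_setOf_norm1_div_lt_le x hk))).1.trans
      ((norm2sq_mulVec_indicator_eq_compl hx T).trans_le hΦt)
  have ht : norm2sq (Tᶜ.indicator x) ≤ A ^ 2 / k :=
    (norm2sq_le_mul_norm1 _ ht_le).trans
      ((mul_le_mul_of_nonneg_left (norm1_indicator_le _ _) hAk).trans_eq (by ring))
  have hx2 : norm2sq x ≤ 9 * (A ^ 2 / k) := by
    rw [← norm2sq_indicator_add_compl T x]
    nlinarith [mul_nonneg (sub_nonneg.2 hδ.le) (norm2sq_nonneg (T.indicator x))]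
  rw [Real.sqrt_le_left (mul_nonneg (by positivity) (norm1_nonneg x)), mul_pow, div_pow,
    Real.sq_sqrt hk'.le]
  exact hx2.trans_eq (by ring)
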